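/- arXiv:1409.6447 — 2 statements merged into one kernel-verified Lean document; each statement's English description precedes it below -/
import Mathlib

section
/- Consider the linear mixed model y = Xβ + Zu + ε with normal residual errors and an arbitrary proper random-effects specification: u | θ is distributed according to a Markov kernel F(·|θ) of probability measures on ℝ^q indexed by θ in a measurable space Θ, π is a probability measure on Θ, and the marginal likelihood is m(y) = ∫_Θ ∫_0^∞ ∫_{ℝ^p} ∫_{ℝ^q} (2πσ_0²)^{−n/2} exp(−‖y − Xβ − Zu‖²/(2σ_0²)) σ_0^{−(2a_0+1)} F(du|θ) dβ dσ_0 π(dθ). If a_0 ≥ 0 and rank(X : Z) < n, then for every y ∈ ℝ^n that does not lie in the column space of (X : Z) (a set of full Lebesgue measure), m(y) < ∞. -/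
open MeasureTheory Real Set Matrix ProbabilityTheory
open scoped ENNReal

lemma gauss_lintegral_zero {p : ℕ} {a : ℝ} (ha : 0 < a) :
    ∫⁻ v : Fin p → ℝ, ENNReal.ofReal (Real.exp (-(a * ∑ i, v i ^ 2))) =
      ENNReal.ofReal (Real.sqrt (Real.pi / a) ^ p) := by
  have hprod : ∀ v : Fin p → ℝ, Real.exp (-(a * ∑ i, v i ^ 2)) =
      ∏ i, Real.exp (-(a * v i ^ 2)) := by
    intro v
    rw [← Real.exp_sum]
    congr 1
    rw [Finset.mul_sum]
    simp [Finset.sum_neg_distrib]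
  have hi : Integrable (fun v : Fin p → ℝ => ∏ i, Real.exp (-(a * v i ^ 2))) := by
    apply Integrable.fintype_prod (f := fun (_ : Fin p) (x : ℝ) => Real.exp (-(a * x ^ 2)))
    intro i
    simpa [neg_mul] using integrable_exp_neg_mul_sq ha
  have hI : (∫ v : Fin p → ℝ, ∏ i, Real.exp (-(a * v i ^ 2)))
      = Real.sqrt (Real.pi / a) ^ p := by
    rw [integral_fintype_prod_volume_eq_prod (f := fun (_ : Fin p) (x : ℝ) => Real.exp (-(a * x ^ 2)))]
    have : (∫ x : ℝ, Real.exp (-(a * x ^ 2))) = Real.sqrt (Real.pi / a) := by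
      simpa [neg_mul] using integral_gaussian a
    rw [this]
    simp
  simp_rw [hprod]
  rw [← ofReal_integral_eq_lintegral_ofReal hi]
  · rw [hI]
  · filter_upwards with v
    positivity

lemma gauss_lintegral {p : ℕ} {a : ℝ} (ha : 0 < a) (b : Fin p → ℝ) :
    ∫⁻ v : Fin p → ℝ, ENNReal.ofReal (Real.exp (-(a * ∑ i, (v i - b i) ^ 2))) =
      ENNReal.ofReal (Real.sqrt (Real.pi / a) ^ p) := by
  have h := lintegral_add_right_eq_self
    (μ := (volume : Measure (Fin p → ℝ)))
    (fun v : Fin p → ℝ => ENNReal.ofReal (Real.exp (-(a * ∑ i, v i ^ 2)))) (-b)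
  calc ∫⁻ v : Fin p → ℝ, ENNReal.ofReal (Real.exp (-(a * ∑ i, (v i - b i) ^ 2)))
      = ∫⁻ v : Fin p → ℝ, ENNReal.ofReal (Real.exp (-(a * ∑ i, ((v + -b) i) ^ 2))) := by
        refine lintegral_congr fun v => ?_
        simp [sub_eq_add_neg]
    _ = ENNReal.ofReal (Real.sqrt (Real.pi / a) ^ p) := by rw [h, gauss_lintegral_zero ha]

lemma sigma_lintegral {K k e : ℝ} (hK : 0 ≤ K) (hk : 0 < k) (he : e ≤ -2) :
    ∫⁻ σ in Set.Ioi (0:ℝ), ENNReal.ofReal (K * σ ^ e * Real.exp (-(k / σ ^ 2))) < ⊤ := by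
  set f : ℝ → ℝ := fun σ => K * σ ^ e * Real.exp (-(k / σ ^ 2)) with hfdef
  have hcont : ContinuousOn f (Set.Ioi (0:ℝ)) := by
    intro σ hσ
    have hσ0 : (0:ℝ) < σ := hσ
    apply ContinuousWithinAt.mul
    · apply ContinuousWithinAt.mul continuousWithinAt_const
      exact (Real.continuousAt_rpow_const σ e (Or.inl hσ0.ne')).continuousWithinAt
    · apply Real.continuous_exp.continuousAt.comp_continuousWithinAt
      apply ContinuousWithinAt.neg
      apply ContinuousWithinAt.div continuousWithinAt_const
        (continuous_pow 2).continuousWithinAt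
      exact pow_ne_zero 2 hσ0.ne'
  have hfnonneg : ∀ σ ∈ Set.Ioi (0:ℝ), 0 ≤ f σ := by
    intro σ hσ
    have : (0:ℝ) < σ := hσ
    have h1 : 0 < (σ:ℝ) ^ e := Real.rpow_pos_of_pos this e
    positivity
  -- integrable on (0,1]
  set M : ℕ := ⌈-e⌉₊ with hM
  have hMe : -((2*M : ℕ) : ℝ) ≤ e := by
    have h1 : -e ≤ (M:ℝ) := Nat.le_ceil _
    push_cast
    nlinarith [Nat.cast_nonneg (α := ℝ) M]
  have h1 : IntegrableOn f (Set.Ioc (0:ℝ) 1) := by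
    have hconst : IntegrableOn (fun _ : ℝ => K * M.factorial / k ^ M) (Set.Ioc (0:ℝ) 1) :=
      integrableOn_const measure_Ioc_lt_top.ne
    apply hconst.mono'
      ((hcont.mono Set.Ioc_subset_Ioi_self).aestronglyMeasurable measurableSet_Ioc)
    filter_upwards [self_mem_ae_restrict measurableSet_Ioc] with σ hσ
    obtain ⟨hσ0, hσ1⟩ := hσ
    have hfσ : 0 ≤ f σ := hfnonneg σ hσ0
    rw [Real.norm_eq_abs, abs_of_nonneg hfσ]
    have hb1 : σ ^ e ≤ σ ^ (-((2*M : ℕ) : ℝ)) :=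
      Real.rpow_le_rpow_of_exponent_ge hσ0 hσ1 hMe
    have hb2 : Real.exp (-(k / σ ^ 2)) ≤ M.factorial * σ ^ (2*M) / k ^ M := by
      have hx : 0 ≤ k / σ ^ 2 := by positivity
      have h3 : (k / σ ^ 2) ^ M / M.factorial ≤ Real.exp (k / σ ^ 2) :=
        Real.pow_div_factorial_le_exp (x := k / σ ^ 2) hx M
      rw [Real.exp_neg]
      rw [div_pow] at h3
      have h4 : 0 < (k ^ M / (σ^2) ^ M) / M.factorial := by positivity
      calc (Real.exp (k / σ ^ 2))⁻¹ ≤ ((k ^ M / (σ^2) ^ M) / M.factorial)⁻¹ := by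
            apply inv_anti₀ h4 h3
        _ = M.factorial * σ ^ (2*M) / k ^ M := by
            rw [← pow_mul]
            field_simp
    have hσpow : σ ^ (-((2*M : ℕ) : ℝ)) = (σ ^ (2*M))⁻¹ := by
      rw [Real.rpow_neg hσ0.le, Real.rpow_natCast]
    calc f σ = K * σ ^ e * Real.exp (-(k / σ ^ 2)) := rfl
      _ ≤ K * σ ^ (-((2*M : ℕ) : ℝ)) * (M.factorial * σ ^ (2*M) / k ^ M) :=
          mul_le_mul (mul_le_mul_of_nonneg_left hb1 hK) hb2 (Real.exp_pos _).le
            (mul_nonneg hK (Real.rpow_pos_of_pos hσ0 _).le)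
      _ = K * M.factorial / k ^ M := by
          rw [hσpow]
          have hσp : (0:ℝ) < σ ^ (2*M) := by positivity
          field_simp
  have h2 : IntegrableOn f (Set.Ioi (1:ℝ)) := by
    have base : IntegrableOn (fun σ : ℝ => K * σ ^ (-2 : ℝ)) (Set.Ioi (1:ℝ)) :=
      (integrableOn_Ioi_rpow_of_lt (by norm_num) one_pos).const_mul K
    apply base.mono' ((hcont.mono (Set.Ioi_subset_Ioi zero_le_one)).aestronglyMeasurable measurableSet_Ioi)
    filter_upwards [self_mem_ae_restrict measurableSet_Ioi] with σ hσ
    have hσ1 : (1:ℝ) < σ := hσ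
    have hσ0 : (0:ℝ) < σ := lt_trans one_pos hσ1
    have hfσ : 0 ≤ f σ := hfnonneg σ hσ0
    rw [Real.norm_eq_abs, abs_of_nonneg hfσ]
    have hb1 : σ ^ e ≤ σ ^ (-2 : ℝ) := Real.rpow_le_rpow_of_exponent_le hσ1.le he
    have hb2 : Real.exp (-(k / σ ^ 2)) ≤ 1 := by
      rw [Real.exp_le_one_iff]
      have : 0 ≤ k / σ ^ 2 := by positivity
      linarith
    calc f σ = K * σ ^ e * Real.exp (-(k / σ ^ 2)) := rfl
      _ ≤ K * σ ^ (-2:ℝ) * 1 :=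
          mul_le_mul (mul_le_mul_of_nonneg_left hb1 hK) hb2 (Real.exp_pos _).le
            (mul_nonneg hK (Real.rpow_pos_of_pos hσ0 _).le)
      _ = K * σ ^ (-2:ℝ) := mul_one _
  have h3 : IntegrableOn f (Set.Ioi (0:ℝ)) := by
    rw [← Set.Ioc_union_Ioi_eq_Ioi (zero_le_one (α := ℝ))]
    exact h1.union h2
  exact h3.setLIntegral_lt_top

lemma geom_bound {n p q : ℕ} (X : Matrix (Fin n) (Fin p) ℝ) (Z : Matrix (Fin n) (Fin q) ℝ)
    (hX : X.rank = p) (y : Fin n → ℝ)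
    (hy : y ∉ LinearMap.range (Matrix.mulVecLin (Matrix.fromCols X Z))) :
    ∃ d > (0:ℝ), ∃ c > (0:ℝ), ∃ β0 : (Fin q → ℝ) → (Fin p → ℝ),
      ∀ u β, d + c * ∑ i, (β i - β0 u i) ^ 2 ≤
        ∑ j, (y j - (X.mulVec β + Z.mulVec u) j) ^ 2 := by
  classical
  let E := EuclideanSpace ℝ (Fin n)
  let TE : (Fin p → ℝ) →ₗ[ℝ] E := (WithLp.linearEquiv 2 ℝ (Fin n → ℝ)).symm.toLinearMap ∘ₗ X.mulVecLin
  let MM : Submodule ℝ E := (LinearMap.range (Matrix.mulVecLin (Matrix.fromCols X Z))).map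
    (WithLp.linearEquiv 2 ℝ (Fin n → ℝ)).symm.toLinearMap
  let yE : E := WithLp.toLp 2 y
  let ZE : (Fin q → ℝ) → E := fun u => WithLp.toLp 2 (Z.mulVec u)
  have hyM : yE ∉ (MM : Set E) := by
    rintro ⟨v, hv, hve⟩
    have hvy : v = y := congrArg WithLp.ofLp hve
    exact hy (hvy ▸ hv)
  have hMclosed : IsClosed (MM : Set E) := Submodule.closed_of_finiteDimensional MM
  set d0 : ℝ := Metric.infDist yE (MM : Set E) with hd0def
  have hd0 : 0 < d0 :=
    (hMclosed.notMem_iff_infDist_pos ⟨0, MM.zero_mem⟩).1 hyM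
  have hker : LinearMap.ker (X.mulVecLin) = ⊥ := by
    rw [Matrix.rank] at hX
    have h1 := LinearMap.finrank_range_add_finrank_ker (X.mulVecLin)
    rw [hX, Module.finrank_fin_fun] at h1
    have h2 : Module.finrank ℝ (LinearMap.ker X.mulVecLin) = 0 := by omega
    exact Submodule.finrank_eq_zero.mp h2
  have hkerTE : LinearMap.ker TE = ⊥ := by
    rw [LinearEquiv.ker_comp]; exact hker
  obtain ⟨K0, hK0pos, hK0⟩ := TE.exists_antilipschitzWith hkerTE
  have hanti : ∀ w : Fin p → ℝ, ‖w‖ ≤ (K0 : ℝ) * ‖TE w‖ := by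
    intro w
    have := hK0.le_mul_dist w 0
    simpa [dist_zero_right, map_zero] using this
  set c : ℝ := ((p : ℝ) * (K0:ℝ) ^ 2 + 1)⁻¹ with hcdef
  have hc : 0 < c := by positivity
  have hc2 : ∀ w : Fin p → ℝ, c * ∑ i, w i ^ 2 ≤ ‖TE w‖ ^ 2 := by
    intro w
    have hsum : ∑ i, w i ^ 2 ≤ (p : ℝ) * ‖w‖ ^ 2 := by
      calc ∑ i, w i ^ 2 ≤ ∑ _i : Fin p, ‖w‖ ^ 2 := by
            apply Finset.sum_le_sum
            intro i _
            have h1 : |w i| ≤ ‖w‖ := by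
              rw [← Real.norm_eq_abs]
              exact norm_le_pi_norm w i
            calc w i ^ 2 = |w i| ^ 2 := (sq_abs _).symm
              _ ≤ ‖w‖ ^ 2 := by
                  apply pow_le_pow_left₀ (abs_nonneg _) h1
        _ = (p : ℝ) * ‖w‖ ^ 2 := by simp [mul_comm]
    have hw2 : ‖w‖ ^ 2 ≤ (K0:ℝ) ^ 2 * ‖TE w‖ ^ 2 := by
      have h1 := hanti w
      nlinarith [norm_nonneg w, norm_nonneg (TE w), NNReal.coe_nonneg K0]
    have h3 : ∑ i, w i ^ 2 ≤ ((p : ℝ) * (K0:ℝ) ^ 2 + 1) * ‖TE w‖ ^ 2 := by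
      nlinarith [norm_nonneg (TE w), Nat.cast_nonneg (α := ℝ) p, NNReal.coe_nonneg K0]
    rw [hcdef]
    rw [inv_mul_le_iff₀ (by positivity)]
    linarith [h3]
  set L : Submodule ℝ E := LinearMap.range TE with hLdef
  have hproj : ∀ u : Fin q → ℝ, ∃ b : Fin p → ℝ,
      TE b = (L.orthogonalProjectionOnto (yE - ZE u) : E) := by
    intro u
    exact LinearMap.mem_range.mp (SetLike.coe_mem _)
  refine ⟨d0 ^ 2, by positivity, c, hc, fun u => (hproj u).choose, ?_⟩
  intro u β
  set w : E := yE - ZE u with hwdef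
  set P : E := (L.orthogonalProjectionOnto w : E) with hPdef
  have hβ0 : TE ((hproj u).choose) = P := (hproj u).choose_spec
  have horth : inner ℝ (P - TE β) (w - P) = (0 : ℝ) := by
    have hmem : P - TE β ∈ L := by
      apply Submodule.sub_mem
      · exact SetLike.coe_mem _
      · exact LinearMap.mem_range_self TE β
    have hperp : w - P ∈ Lᗮ := Submodule.sub_starProjection_mem_orthogonal (K := L) w
    exact hperp (P - TE β) hmem
  have hdecomp : ‖w - TE β‖ ^ 2 = ‖w - P‖ ^ 2 + ‖P - TE β‖ ^ 2 := by
    have hsplit : w - TE β = (w - P) + (P - TE β) := by abel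
    rw [hsplit, norm_add_sq_real]
    have h0 : inner ℝ (w - P) (P - TE β) = (0:ℝ) := by
      rw [real_inner_comm]; exact horth
    rw [h0]; ring
  have h1 : d0 ≤ ‖w - P‖ := by
    have hZuM : ZE u ∈ MM := by
      refine ⟨Z.mulVec u, ⟨Sum.elim 0 u, ?_⟩, rfl⟩
      show Matrix.fromCols X Z *ᵥ Sum.elim 0 u = Z.mulVec u
      rw [Matrix.fromCols_mulVec_sumElim, Matrix.mulVec_zero, zero_add]
    have hPM : P ∈ MM := by
      have hPL : P ∈ L := SetLike.coe_mem _
      obtain ⟨b, hb⟩ := hPL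
      refine ⟨X.mulVec b, ⟨Sum.elim b 0, ?_⟩, hb⟩
      show Matrix.fromCols X Z *ᵥ Sum.elim b 0 = _
      rw [Matrix.fromCols_mulVec_sumElim, Matrix.mulVec_zero, add_zero]
    have hmem : ZE u + P ∈ MM := MM.add_mem hZuM hPM
    have hdist := Metric.infDist_le_dist_of_mem (x := yE) hmem
    rw [dist_eq_norm] at hdist
    rw [hd0def]
    calc Metric.infDist yE (MM : Set E) ≤ ‖yE - (ZE u + P)‖ := hdist
      _ = ‖w - P‖ := by rw [hwdef]; congr 1; abel
  have h2 : c * ∑ i, (β i - (hproj u).choose i) ^ 2 ≤ ‖P - TE β‖ ^ 2 := by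
    have hPT : P - TE β = TE ((hproj u).choose - β) := by
      rw [map_sub, hβ0]
    rw [hPT]
    have hb := hc2 ((hproj u).choose - β)
    calc c * ∑ i, (β i - (hproj u).choose i) ^ 2
        = c * ∑ i, ((hproj u).choose - β) i ^ 2 := by
          congr 1
          apply Finset.sum_congr rfl
          intro i _
          rw [Pi.sub_apply]
          ring
      _ ≤ ‖TE ((hproj u).choose - β)‖ ^ 2 := hb
  have hws : ∀ j, (w - TE β) j = y j - ((X.mulVec β) j + (Z.mulVec u) j) := by
    intro j
    have e1 : (w - TE β) j = w j - (TE β) j := rfl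
    have e2 : w j = y j - (Z.mulVec u) j := rfl
    have e3 : (TE β) j = (X.mulVec β) j := rfl
    rw [e1, e2, e3]; ring
  have hfinal : ‖w - TE β‖ ^ 2 = ∑ j, (y j - (X.mulVec β + Z.mulVec u) j) ^ 2 := by
    rw [EuclideanSpace.norm_eq, Real.sq_sqrt (by positivity)]
    apply Finset.sum_congr rfl
    intro j _
    rw [Real.norm_eq_abs, sq_abs, hws j, Pi.add_apply]
  have hd0sq : d0 ^ 2 ≤ ‖w - P‖ ^ 2 := pow_le_pow_left₀ hd0.le h1 2
  linarith [hdecomp, hfinal, h2, hd0sq]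

/-- Propriety of the posterior of the linear mixed model with normal residual
errors, an arbitrary proper random-effects distribution `u | θ ~ F(·|θ)` with proper prior `π`
on `θ`, and prior `σ₀^{-(2a₀+1)}` on the residual scale, provided `a₀ ≥ 0`,
`rank(X : Z) < n`, and `y` is outside the column space of `(X : Z)`. -/
theorem lmm_arbitrary_proper_random_effects_posterior_proper
    {n p q : ℕ} {Θ : Type*} [MeasurableSpace Θ]
    (X : Matrix (Fin n) (Fin p) ℝ) (Z : Matrix (Fin n) (Fin q) ℝ)
    (F : Kernel Θ (Fin q → ℝ)) [IsMarkovKernel F]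
    (πθ : Measure Θ) [IsProbabilityMeasure πθ]
    (a0 : ℝ)
    (hnp : p < n) (hX : X.rank = p)
    (ha0 : 0 ≤ a0)
    (hrank : (Matrix.fromCols X Z).rank < n)
    (y : Fin n → ℝ)
    (hy : y ∉ LinearMap.range (Matrix.mulVecLin (Matrix.fromCols X Z))) :
    (∫⁻ θ, (∫⁻ σ0 in Set.Ioi (0 : ℝ), ∫⁻ β : Fin p → ℝ,
        ∫⁻ u : Fin q → ℝ,
          ENNReal.ofReal (
            (2 * Real.pi * σ0 ^ 2) ^ (-(n : ℝ) / 2) *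
              Real.exp (-(∑ j, (y j - (X.mulVec β + Z.mulVec u) j) ^ 2) / (2 * σ0 ^ 2)) *
              σ0 ^ (-(2 * a0 + 1))) ∂(F θ)) ∂πθ) < ⊤ := by
  obtain ⟨d, hd, c, hc, β0, hbound⟩ := geom_bound X Z hX y hy
  set e : ℝ := -(n:ℝ) + -(2 * a0 + 1) + (p:ℝ) with hedef
  set K : ℝ := (2 * Real.pi) ^ (-(n:ℝ)/2) * Real.sqrt (2 * Real.pi / c) ^ p with hKdef
  have hK0 : 0 ≤ K := by positivity
  have he2 : e ≤ -2 := by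
    have hpn : (p:ℝ) + 1 ≤ (n:ℝ) := by exact_mod_cast hnp
    rw [hedef]; linarith
  set C0 : ℝ≥0∞ :=
    ∫⁻ σ in Set.Ioi (0:ℝ), ENNReal.ofReal (K * σ ^ e * Real.exp (-((d/2) / σ ^ 2))) with hC0def
  have hC0 : C0 < ⊤ := sigma_lintegral hK0 (by positivity) he2
  have hmain : ∀ θ, (∫⁻ σ0 in Set.Ioi (0 : ℝ), ∫⁻ β : Fin p → ℝ,
        ∫⁻ u : Fin q → ℝ,
          ENNReal.ofReal (
            (2 * Real.pi * σ0 ^ 2) ^ (-(n : ℝ) / 2) *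
              Real.exp (-(∑ j, (y j - (X.mulVec β + Z.mulVec u) j) ^ 2) / (2 * σ0 ^ 2)) *
              σ0 ^ (-(2 * a0 + 1))) ∂(F θ)) ≤ C0 := by
    intro θ
    rw [hC0def]
    apply setLIntegral_mono' measurableSet_Ioi
    intro σ hσ
    have hσ0 : (0:ℝ) < σ := hσ
    set A : ℝ := (2 * Real.pi * σ ^ 2) ^ (-(n : ℝ) / 2) with hAdef
    set B : ℝ := σ ^ (-(2 * a0 + 1)) with hBdef
    have hA0 : 0 ≤ A := by rw [hAdef]; positivity
    have hB0 : 0 ≤ B := by rw [hBdef]; positivity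
    set Ex : ℝ := Real.exp (-((d/2) / σ ^ 2)) with hExdef
    set G : ℝ := Real.sqrt (Real.pi / (c / (2 * σ ^ 2))) ^ p with hGdef
    -- measurability
    have hS : Measurable fun z : (Fin p → ℝ) × (Fin q → ℝ) =>
        ∑ j, (y j - (X.mulVec z.1 + Z.mulVec z.2) j) ^ 2 := by
      apply Finset.measurable_sum
      intro j _
      apply Measurable.pow_const
      apply Measurable.sub measurable_const
      have h1 : Measurable fun z : (Fin p → ℝ) × (Fin q → ℝ) => X.mulVec z.1 j := by
        simp only [Matrix.mulVec, dotProduct]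
        exact Finset.measurable_sum _ fun k _ =>
          measurable_const.mul ((measurable_pi_apply k).comp measurable_fst)
      have h2 : Measurable fun z : (Fin p → ℝ) × (Fin q → ℝ) => Z.mulVec z.2 j := by
        simp only [Matrix.mulVec, dotProduct]
        exact Finset.measurable_sum _ fun k _ =>
          measurable_const.mul ((measurable_pi_apply k).comp measurable_snd)
      simp only [Pi.add_apply]
      exact h1.add h2
    have hfm : Measurable fun z : (Fin p → ℝ) × (Fin q → ℝ) =>
        ENNReal.ofReal (Real.exp (-(∑ j, (y j - (X.mulVec z.1 + Z.mulVec z.2) j) ^ 2)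
          / (2 * σ ^ 2))) :=
      (((hS.neg).div_const _).exp).ennreal_ofReal
    -- step 1 : factor constants
    have hpt : ∀ (β : Fin p → ℝ) (u : Fin q → ℝ),
        ENNReal.ofReal (A *
            Real.exp (-(∑ j, (y j - (X.mulVec β + Z.mulVec u) j) ^ 2) / (2 * σ ^ 2)) * B)
          = ENNReal.ofReal (A * B) *
            ENNReal.ofReal (Real.exp (-(∑ j, (y j - (X.mulVec β + Z.mulVec u) j) ^ 2)
              / (2 * σ ^ 2))) := by
      intro β u
      rw [← ENNReal.ofReal_mul (mul_nonneg hA0 hB0)]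
      congr 1
      ring
    calc (∫⁻ β : Fin p → ℝ, ∫⁻ u : Fin q → ℝ,
            ENNReal.ofReal (A *
              Real.exp (-(∑ j, (y j - (X.mulVec β + Z.mulVec u) j) ^ 2) / (2 * σ ^ 2)) * B)
            ∂(F θ))
        = ENNReal.ofReal (A * B) * ∫⁻ β : Fin p → ℝ, ∫⁻ u : Fin q → ℝ,
            ENNReal.ofReal (Real.exp (-(∑ j, (y j - (X.mulVec β + Z.mulVec u) j) ^ 2)
              / (2 * σ ^ 2))) ∂(F θ) := by
          simp_rw [hpt, lintegral_const_mul' (ENNReal.ofReal (A * B)) _ ENNReal.ofReal_ne_top]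
      _ = ENNReal.ofReal (A * B) * ∫⁻ u : Fin q → ℝ, ∫⁻ β : Fin p → ℝ,
            ENNReal.ofReal (Real.exp (-(∑ j, (y j - (X.mulVec β + Z.mulVec u) j) ^ 2)
              / (2 * σ ^ 2))) ∂(volume) ∂(F θ) := by
          congr 1
          exact lintegral_lintegral_swap hfm.aemeasurable
      _ ≤ ENNReal.ofReal (A * B) * ∫⁻ _u : Fin q → ℝ,
            ENNReal.ofReal Ex * ENNReal.ofReal G ∂(F θ) := by
          apply mul_le_mul_right
          apply lintegral_mono
          intro u
          -- inner beta integral bound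
          have hstep : ∀ β : Fin p → ℝ,
              ENNReal.ofReal (Real.exp (-(∑ j, (y j - (X.mulVec β + Z.mulVec u) j) ^ 2)
                / (2 * σ ^ 2)))
              ≤ ENNReal.ofReal Ex *
                ENNReal.ofReal (Real.exp (-((c / (2 * σ ^ 2)) *
                  ∑ i, (β i - β0 u i) ^ 2))) := by
            intro β
            rw [← ENNReal.ofReal_mul (Real.exp_pos _).le, ← Real.exp_add]
            apply ENNReal.ofReal_le_ofReal
            apply Real.exp_le_exp.mpr
            have hb := hbound u β
            have h2σ : (0:ℝ) < 2 * σ ^ 2 := by positivity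
            have heq : -((d/2) / σ ^ 2) + -((c / (2 * σ ^ 2)) * ∑ i, (β i - β0 u i) ^ 2)
                = (-(d + c * ∑ i, (β i - β0 u i) ^ 2)) / (2 * σ ^ 2) := by
              field_simp
              ring
            rw [heq]
            gcongr
          calc (∫⁻ β : Fin p → ℝ,
                ENNReal.ofReal (Real.exp (-(∑ j, (y j - (X.mulVec β + Z.mulVec u) j) ^ 2)
                  / (2 * σ ^ 2))))
              ≤ ∫⁻ β : Fin p → ℝ, ENNReal.ofReal Ex *
                  ENNReal.ofReal (Real.exp (-((c / (2 * σ ^ 2)) *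
                    ∑ i, (β i - β0 u i) ^ 2))) := lintegral_mono hstep
            _ = ENNReal.ofReal Ex * ∫⁻ β : Fin p → ℝ,
                  ENNReal.ofReal (Real.exp (-((c / (2 * σ ^ 2)) *
                    ∑ i, (β i - β0 u i) ^ 2))) :=
                lintegral_const_mul' _ _ ENNReal.ofReal_ne_top
            _ = ENNReal.ofReal Ex * ENNReal.ofReal G := by
                rw [gauss_lintegral (show (0:ℝ) < c / (2 * σ ^ 2) by positivity) (β0 u)]
      _ ≤ ENNReal.ofReal (K * σ ^ e * Real.exp (-((d/2) / σ ^ 2))) := by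
          rw [lintegral_const, measure_univ, mul_one]
          have hA2 : A = (2 * Real.pi) ^ (-(n:ℝ)/2) * σ ^ (-(n:ℝ)) := by
            rw [hAdef, Real.mul_rpow (by positivity) (sq_nonneg σ)]
            congr 1
            rw [← Real.rpow_natCast σ 2, ← Real.rpow_mul hσ0.le]
            congr 1
            push_cast
            ring
          have hG2 : G = σ ^ (p:ℝ) * Real.sqrt (2 * Real.pi / c) ^ p := by
            rw [hGdef, show Real.pi / (c / (2 * σ ^ 2)) = σ ^ 2 * (2 * Real.pi / c) by
              field_simp, Real.sqrt_mul (sq_nonneg σ), Real.sqrt_sq hσ0.le, mul_pow,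
              ← Real.rpow_natCast σ p]
          have hreal : A * B * (Ex * G) = K * σ ^ e * Real.exp (-((d/2) / σ ^ 2)) := by
            rw [hA2, hG2, hBdef, hKdef, hedef, Real.rpow_add hσ0, Real.rpow_add hσ0, hExdef]
            ring
          have hEx0 : (0:ℝ) ≤ Ex := by rw [hExdef]; positivity
          calc ENNReal.ofReal (A * B) * (ENNReal.ofReal Ex * ENNReal.ofReal G)
              = ENNReal.ofReal (A * B * (Ex * G)) := by
                rw [← ENNReal.ofReal_mul hEx0, ← ENNReal.ofReal_mul (mul_nonneg hA0 hB0)]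
            _ = ENNReal.ofReal (K * σ ^ e * Real.exp (-((d/2) / σ ^ 2))) := by rw [hreal]
            _ ≤ _ := le_refl _
  calc (∫⁻ θ, (∫⁻ σ0 in Set.Ioi (0 : ℝ), ∫⁻ β : Fin p → ℝ, ∫⁻ u : Fin q → ℝ,
          ENNReal.ofReal (
            (2 * Real.pi * σ0 ^ 2) ^ (-(n : ℝ) / 2) *
              Real.exp (-(∑ j, (y j - (X.mulVec β + Z.mulVec u) j) ^ 2) / (2 * σ0 ^ 2)) *
              σ0 ^ (-(2 * a0 + 1))) ∂(F θ)) ∂πθ)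
      ≤ ∫⁻ _θ, C0 ∂πθ := lintegral_mono hmain
    _ = C0 := by rw [lintegral_const, measure_univ, mul_one]
    _ < ⊤ := hC0
end

section
/- Consider the one-way random-effect probit model with FSN random effects, where the density p is upper bounded: there is K > 0 with p(w|λ) ≤ K for all w ∈ [0,1] and λ ∈ Λ. Suppose (i) there is r_1 with 2 ≤ r_1 ≤ r such that for each i = 1,…,r_1 the i-th group contains at least one success (some y_{ik} = 1) and at least one failure (some y_{ik} = 0); and (ii) −(r_1−1)/2 < a_1 < 0. Then the marginal likelihood m(y) is finite, i.e. the posterior distribution of (μ, σ, λ) is proper. -/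
open MeasureTheory Real Set
open scoped ENNReal

noncomputable def stdNormalPDF (x : ℝ) : ℝ :=
  (Real.sqrt (2 * Real.pi))⁻¹ * Real.exp (-(x ^ 2) / 2)

noncomputable def stdNormalCDF (x : ℝ) : ℝ :=
  ∫ t in Set.Iic x, stdNormalPDF t

lemma sqrt2pi_pos : 0 < Real.sqrt (2 * π) :=
  Real.sqrt_pos.2 (by positivity)

lemma stdNormalPDF_nonneg (x : ℝ) : 0 ≤ stdNormalPDF x := by
  unfold stdNormalPDF; positivity

lemma stdNormalPDF_eq (x : ℝ) :
    stdNormalPDF x = (Real.sqrt (2 * π))⁻¹ * Real.exp (-(1/2 : ℝ) * x ^ 2) := by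
  unfold stdNormalPDF; ring_nf

lemma integrable_stdNormalPDF : Integrable stdNormalPDF := by
  simp only [funext stdNormalPDF_eq]
  exact (integrable_exp_neg_mul_sq (by norm_num : (0:ℝ) < 1/2)).const_mul _

lemma integral_stdNormalPDF : ∫ x, stdNormalPDF x = 1 := by
  simp only [funext stdNormalPDF_eq]
  rw [integral_const_mul, integral_gaussian]
  rw [show π / (1/2 : ℝ) = 2 * π by ring]
  rw [inv_mul_cancel₀ (ne_of_gt sqrt2pi_pos)]

lemma stdNormalCDF_nonneg (x : ℝ) : 0 ≤ stdNormalCDF x :=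
  setIntegral_nonneg measurableSet_Iic (fun t _ => stdNormalPDF_nonneg t)

lemma stdNormalCDF_le_one (x : ℝ) : stdNormalCDF x ≤ 1 := by
  rw [← integral_stdNormalPDF]
  exact setIntegral_le_integral integrable_stdNormalPDF
    (Filter.Eventually.of_forall stdNormalPDF_nonneg)

lemma shift_bound {x t : ℝ} (h : 0 ≤ x * (t - x)) :
    stdNormalPDF t ≤ Real.exp (-(x^2)/2) * stdNormalPDF (t - x) := by
  rw [stdNormalPDF, stdNormalPDF, ← mul_assoc, mul_comm (Real.exp (-(x^2)/2)) _, mul_assoc]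
  apply mul_le_mul_of_nonneg_left _ (by positivity)
  rw [← Real.exp_add]
  apply Real.exp_le_exp.2
  nlinarith

lemma integral_shift_pdf_le (x c : ℝ) {s : Set ℝ} :
    ∫ t in s, stdNormalPDF (t - c) ≤ 1 := by
  have h2 : Integrable (fun t => stdNormalPDF (t - c)) volume :=
    integrable_stdNormalPDF.comp_sub_right c
  have h := setIntegral_le_integral (f := fun t => stdNormalPDF (t - c)) (s := s) h2
    (Filter.Eventually.of_forall (fun t => stdNormalPDF_nonneg _))
  simpa [integral_sub_right_eq_self stdNormalPDF c, integral_stdNormalPDF] using h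

lemma stdNormalCDF_le {x : ℝ} (hx : x ≤ 0) : stdNormalCDF x ≤ Real.exp (-(x^2)/2) := by
  have h1 : stdNormalCDF x ≤ ∫ t in Iic x, Real.exp (-(x^2)/2) * stdNormalPDF (t - x) := by
    apply setIntegral_mono_on integrable_stdNormalPDF.integrableOn
      ((integrable_stdNormalPDF.comp_sub_right x).const_mul _).integrableOn measurableSet_Iic
    intro t ht
    simp only [mem_Iic] at ht
    exact shift_bound (by nlinarith)
  calc stdNormalCDF x ≤ _ := h1
    _ = Real.exp (-(x^2)/2) * ∫ t in Iic x, stdNormalPDF (t - x) := integral_const_mul _ _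
    _ ≤ Real.exp (-(x^2)/2) * 1 :=
        mul_le_mul_of_nonneg_left (integral_shift_pdf_le x x) (le_of_lt (Real.exp_pos _))
    _ = _ := mul_one _

lemma one_sub_stdNormalCDF_le {x : ℝ} (hx : 0 ≤ x) :
    1 - stdNormalCDF x ≤ Real.exp (-(x^2)/2) := by
  have hcompl := integral_add_compl (measurableSet_Iic (a := x)) integrable_stdNormalPDF
  rw [compl_Iic, integral_stdNormalPDF] at hcompl
  have h2 : 1 - stdNormalCDF x = ∫ t in Ioi x, stdNormalPDF t := by
    rw [stdNormalCDF]; linarith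
  rw [h2]
  have h1 : ∫ t in Ioi x, stdNormalPDF t ≤
      ∫ t in Ioi x, Real.exp (-(x^2)/2) * stdNormalPDF (t - x) := by
    apply setIntegral_mono_on integrable_stdNormalPDF.integrableOn
      ((integrable_stdNormalPDF.comp_sub_right x).const_mul _).integrableOn measurableSet_Ioi
    intro t ht
    simp only [mem_Ioi] at ht
    exact shift_bound (mul_nonneg hx (by linarith))
  calc (∫ t in Ioi x, stdNormalPDF t) ≤ _ := h1
    _ = Real.exp (-(x^2)/2) * ∫ t in Ioi x, stdNormalPDF (t - x) := integral_const_mul _ _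
    _ ≤ Real.exp (-(x^2)/2) * 1 :=
        mul_le_mul_of_nonneg_left (integral_shift_pdf_le x x) (le_of_lt (Real.exp_pos _))
    _ = _ := mul_one _

lemma cdf_mul_le (x : ℝ) :
    stdNormalCDF x * (1 - stdNormalCDF x) ≤ Real.exp (-(x^2)/2) := by
  rcases le_or_gt x 0 with hx | hx
  · nlinarith [stdNormalCDF_le hx, stdNormalCDF_nonneg x, stdNormalCDF_le_one x,
      Real.exp_pos (-(x^2)/2)]
  · nlinarith [one_sub_stdNormalCDF_le hx.le, stdNormalCDF_nonneg x, stdNormalCDF_le_one x,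
      Real.exp_pos (-(x^2)/2)]

lemma gauss_shift_integrable {b : ℝ} (c : ℝ) (hb : 0 < b) :
    Integrable (fun v => Real.exp (-(b * (v + c)^2))) := by
  have h := (integrable_exp_neg_mul_sq hb).comp_add_right c
  simpa [neg_mul] using h

lemma gauss_shift_integral {b : ℝ} (c : ℝ) (hb : 0 < b) :
    ∫ v, Real.exp (-(b * (v + c)^2)) = Real.sqrt (π / b) := by
  have h := integral_add_right_eq_self (μ := volume) (fun x => Real.exp (-b * x^2)) c
  simp only [neg_mul] at h ⊢
  rw [h]
  simpa [neg_mul] using integral_gaussian b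

lemma int2_eq {σ : ℝ} (hσ : 0 < σ) (K v : ℝ) :
    K * (1/σ) * stdNormalPDF (v/σ) =
      (K * (1/σ) * (Real.sqrt (2*π))⁻¹) * Real.exp (-((1/(2*σ^2)) * (v+0)^2)) := by
  unfold stdNormalPDF
  rw [show (-((v/σ)^2)/2 : ℝ) = -((1/(2*σ^2)) * (v+0)^2) from by
    rw [add_zero]; field_simp]
  ring

lemma int2_integrable {σ : ℝ} (K : ℝ) (hσ : 0 < σ) :
    Integrable (fun v => K * (1/σ) * stdNormalPDF (v/σ)) := by
  simp only [fun v => int2_eq hσ K v]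
  exact (gauss_shift_integrable 0 (by positivity)).const_mul _

lemma int2_integral {σ : ℝ} (K : ℝ) (hσ : 0 < σ) :
    ∫ v, K * (1/σ) * stdNormalPDF (v/σ) = K := by
  simp only [fun v => int2_eq hσ K v]
  rw [integral_const_mul, gauss_shift_integral 0 (by positivity)]
  rw [show (π / (1/(2*σ^2)) : ℝ) = σ^2 * (2*π) from by field_simp]
  rw [Real.sqrt_mul (sq_nonneg σ), Real.sqrt_sq hσ.le]
  field_simp

lemma int1_eq {σ : ℝ} (hσ : 0 < σ) (K μ v : ℝ) :
    Real.exp (-((μ+v)^2)/2) * (K * (1/σ) * stdNormalPDF (v/σ)) =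
      (K * (1/σ) * (Real.sqrt (2*π))⁻¹ * Real.exp (-(μ^2/(2*(1+σ^2))))) *
        Real.exp (-(((1+σ^2)/(2*σ^2)) * (v + μ*σ^2/(1+σ^2))^2)) := by
  have h1 : (1:ℝ) + σ^2 ≠ 0 := by positivity
  have key : (-((μ+v)^2)/2 : ℝ) + (-((v/σ)^2)/2) =
      (-(μ^2/(2*(1+σ^2)))) + (-(((1+σ^2)/(2*σ^2)) * (v + μ*σ^2/(1+σ^2))^2)) := by
    field_simp
    ring
  unfold stdNormalPDF
  calc Real.exp (-((μ+v)^2)/2) * (K * (1/σ) * ((Real.sqrt (2*π))⁻¹ *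
          Real.exp (-((v/σ)^2)/2)))
      = (K * (1/σ) * (Real.sqrt (2*π))⁻¹) *
          (Real.exp (-((μ+v)^2)/2) * Real.exp (-((v/σ)^2)/2)) := by ring
    _ = (K * (1/σ) * (Real.sqrt (2*π))⁻¹) *
          Real.exp ((-((μ+v)^2)/2) + (-((v/σ)^2)/2)) := by rw [Real.exp_add]
    _ = _ := by rw [key, Real.exp_add]; ring

lemma int1_integrable {σ : ℝ} (K μ : ℝ) (hσ : 0 < σ) :
    Integrable (fun v => Real.exp (-((μ+v)^2)/2) * (K * (1/σ) * stdNormalPDF (v/σ))) := by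
  simp only [fun v => int1_eq hσ K μ v]
  exact (gauss_shift_integrable _ (by positivity)).const_mul _

lemma int1_integral {σ : ℝ} (K μ : ℝ) (hσ : 0 < σ) :
    ∫ v, Real.exp (-((μ+v)^2)/2) * (K * (1/σ) * stdNormalPDF (v/σ)) =
      K * Real.exp (-(μ^2/(2*(1+σ^2)))) / Real.sqrt (1+σ^2) := by
  have h1 : (0:ℝ) < 1 + σ^2 := by positivity
  simp only [fun v => int1_eq hσ K μ v]
  rw [integral_const_mul, gauss_shift_integral _ (by positivity)]
  rw [show (π / ((1+σ^2)/(2*σ^2)) : ℝ) = σ^2 * (2*π) / (1+σ^2) from by field_simp]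
  rw [Real.sqrt_div (by positivity) , Real.sqrt_mul (sq_nonneg σ), Real.sqrt_sq hσ.le]
  have h2 : Real.sqrt (2*π) ≠ 0 := ne_of_gt sqrt2pi_pos
  have h3 : Real.sqrt (1+σ^2) ≠ 0 := by positivity
  field_simp

lemma mu_int_eq {σ : ℝ} (n : ℕ) (μ : ℝ) :
    Real.exp (-((n:ℝ)*μ^2/(2*(1+σ^2)))) =
      Real.exp (-(((n:ℝ)/(2*(1+σ^2))) * (μ+0)^2)) := by
  rw [add_zero]; ring_nf

lemma mu_integrable {σ : ℝ} (n : ℕ) (hn : 1 ≤ n) :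
    Integrable (fun μ => Real.exp (-((n:ℝ)*μ^2/(2*(1+σ^2))))) := by
  simp only [fun μ => mu_int_eq (σ := σ) n μ]
  exact gauss_shift_integrable 0 (by positivity)

lemma mu_integral_le {σ : ℝ} (n : ℕ) (hn : 1 ≤ n) :
    ∫ μ, Real.exp (-((n:ℝ)*μ^2/(2*(1+σ^2)))) ≤
      Real.sqrt (2*π) * Real.sqrt (1+σ^2) := by
  have h1 : (0:ℝ) < 1 + σ^2 := by positivity
  have hn' : (1:ℝ) ≤ (n:ℝ) := by exact_mod_cast hn
  simp only [fun μ => mu_int_eq (σ := σ) n μ]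
  rw [gauss_shift_integral 0 (by positivity)]
  rw [← Real.sqrt_mul (by positivity)]
  apply Real.sqrt_le_sqrt
  rw [div_div_eq_mul_div, div_le_iff₀ (by positivity)]
  calc π * (2*(1+σ^2)) = 2*π*(1+σ^2) * 1 := by ring
    _ ≤ 2*π*(1+σ^2) * n := by
        apply mul_le_mul_of_nonneg_left hn' (by positivity)
    _ = 2*(1+σ^2)*π*n := by ring
    _ ≤ _ := by nlinarith [Real.pi_pos, sq_nonneg σ]

lemma card_filter_lt {r r1 : ℕ} (h : r1 ≤ r) :
    (Finset.univ.filter (fun i : Fin r => (i:ℕ) < r1)).card = r1 := by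
  have he : Finset.univ.filter (fun i : Fin r => (i:ℕ) < r1) =
      Finset.univ.map (Fin.castLEEmb h) := by
    ext i
    simp only [Finset.mem_filter, Finset.mem_univ, true_and, Finset.mem_map,
      Fin.castLEEmb_apply]
    constructor
    · intro hi
      exact ⟨⟨(i:ℕ), hi⟩, by ext; simp⟩
    · rintro ⟨a, rfl⟩
      exact a.isLt
  rw [he, Finset.card_map, Finset.card_univ, Fintype.card_fin]

lemma lint_lt_top_of_integrableOn {f : ℝ → ℝ} {s : Set ℝ}
    (hf : IntegrableOn f s) : ∫⁻ x in s, ENNReal.ofReal (f x) < ⊤ := by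
  calc ∫⁻ x in s, ENNReal.ofReal (f x) ≤ ∫⁻ x in s, ‖f x‖₊ := by
        apply lintegral_mono
        intro x
        show ENNReal.ofReal (f x) ≤ (‖f x‖₊ : ℝ≥0∞)
        rw [show ((‖f x‖₊ : ℝ≥0∞)) = ENNReal.ofReal |f x| from Real.enorm_eq_ofReal_abs _]
        exact ENNReal.ofReal_le_ofReal (le_abs_self _)
    _ < ⊤ := hf.2

lemma sqrtq_cont (n : ℕ) : Continuous (fun σ : ℝ => ((Real.sqrt (1+σ^2))^n)⁻¹) := by
  apply Continuous.inv₀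
  · exact ((Real.continuous_sqrt.comp (continuous_const.add (continuous_pow 2))).pow n)
  · intro x
    have h1 : (1:ℝ) ≤ Real.sqrt (1+x^2) := Real.one_le_sqrt.2 (by nlinarith [sq_nonneg x])
    positivity

lemma sigma_fun_contOn (p : ℝ) (n : ℕ) :
    ContinuousOn (fun σ : ℝ => σ ^ p * ((Real.sqrt (1+σ^2))^n)⁻¹) (Ioi 0) := by
  apply ContinuousOn.mul
  · intro x hx
    exact (Real.continuousAt_rpow_const x p (Or.inl (ne_of_gt hx))).continuousWithinAt
  · exact (sqrtq_cont n).continuousOn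

lemma sigma_integrableOn {p : ℝ} (n : ℕ) (h1 : -1 < p) (h2 : p - n < -1) :
    IntegrableOn (fun σ : ℝ => σ ^ p * ((Real.sqrt (1+σ^2))^n)⁻¹) (Ioi 0) := by
  rw [← Ioc_union_Ioi_eq_Ioi (zero_le_one (α := ℝ))]
  apply IntegrableOn.union
  · -- on Ioc 0 1
    have hg1 : IntegrableOn (fun σ : ℝ => σ ^ p) (Ioc 0 1) := by
      have h := intervalIntegral.intervalIntegrable_rpow' (a := 0) (b := 1) h1
      rwa [intervalIntegrable_iff, uIoc_of_le zero_le_one] at h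
    apply Integrable.mono hg1
    · exact (((sigma_fun_contOn p n).mono Ioc_subset_Ioi_self)).aestronglyMeasurable
        measurableSet_Ioc
    · rw [ae_restrict_iff' measurableSet_Ioc]
      apply Filter.Eventually.of_forall
      intro x hx
      have hx0 : 0 < x := hx.1
      have hs : (1:ℝ) ≤ Real.sqrt (1+x^2) := Real.one_le_sqrt.2 (by nlinarith [sq_nonneg x])
      have hinv : ((Real.sqrt (1+x^2))^n)⁻¹ ≤ 1 := by
        apply inv_le_one_of_one_le₀
        exact one_le_pow₀ hs
      have h0 : (0:ℝ) ≤ x ^ p := Real.rpow_nonneg hx0.le p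
      rw [Real.norm_eq_abs, Real.norm_eq_abs, abs_of_nonneg h0,
        abs_of_nonneg (mul_nonneg h0 (by positivity))]
      calc x ^ p * ((Real.sqrt (1+x^2))^n)⁻¹ ≤ x ^ p * 1 :=
            mul_le_mul_of_nonneg_left hinv h0
        _ = x ^ p := mul_one _
  · -- on Ioi 1
    have hg2 : IntegrableOn (fun σ : ℝ => σ ^ (p - n)) (Ioi 1) :=
      integrableOn_Ioi_rpow_of_lt h2 one_pos
    apply Integrable.mono hg2
    · exact (((sigma_fun_contOn p n).mono (fun x (hx : x ∈ Ioi (1:ℝ)) => mem_Ioi.2 (lt_trans one_pos hx)))).aestronglyMeasurable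
        measurableSet_Ioi
    · rw [ae_restrict_iff' measurableSet_Ioi]
      apply Filter.Eventually.of_forall
      intro x hx
      simp only [mem_Ioi] at hx
      have hx0 : (0:ℝ) < x := lt_trans one_pos hx
      have hxs : x ≤ Real.sqrt (1+x^2) := by
        have h := Real.sqrt_le_sqrt (show x^2 ≤ 1+x^2 by nlinarith)
        rwa [Real.sqrt_sq hx0.le] at h
      have hpow : x^n ≤ (Real.sqrt (1+x^2))^n := pow_le_pow_left₀ hx0.le hxs n
      have hinv : ((Real.sqrt (1+x^2))^n)⁻¹ ≤ (x^n)⁻¹ := by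
        apply inv_anti₀ (by positivity) hpow
      have h0 : (0:ℝ) ≤ x ^ p := Real.rpow_nonneg hx0.le p
      rw [Real.norm_eq_abs, Real.norm_eq_abs,
        abs_of_nonneg (Real.rpow_nonneg hx0.le _),
        abs_of_nonneg (mul_nonneg h0 (by positivity))]
      calc x ^ p * ((Real.sqrt (1+x^2))^n)⁻¹ ≤ x ^ p * (x^n)⁻¹ :=
            mul_le_mul_of_nonneg_left hinv h0
        _ = x ^ (p - (n:ℝ)) := by
            rw [Real.rpow_sub hx0, ← Real.rpow_natCast x n]; rfl

/-- The Ferreira–Steel density `s(u | 0, σ, λ) = (1/σ) p(Φ(u/σ) | λ) φ(u/σ)`. -/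
noncomputable def fsnPDF (pdens : ℝ → ℝ → ℝ) (σ lam u : ℝ) : ℝ :=
  (1 / σ) * pdens (stdNormalCDF (u / σ)) lam * stdNormalPDF (u / σ)

/-- Marginal likelihood of the one-way random-effect probit model with FSN random effects.
`yobs i k ∈ {0, 1}` is the `k`-th binary observation in group `i`. -/
noncomputable def probitFSNMarginal {r : ℕ} {qs : Fin r → ℕ}
    (yobs : (i : Fin r) → Fin (qs i) → ℕ)
    (pdens : ℝ → ℝ → ℝ) (Λset : Set ℝ) (πlam : ℝ → ℝ) (a1 : ℝ) : ℝ≥0∞ :=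
  ∫⁻ lam in Λset,
    ∫⁻ σ in Set.Ioi (0 : ℝ),
      ∫⁻ μ : ℝ,
        ∫⁻ u : Fin r → ℝ,
          ENNReal.ofReal (
            (∏ i, ∏ k, (stdNormalCDF (μ + u i)) ^ (yobs i k) *
              (1 - stdNormalCDF (μ + u i)) ^ (1 - yobs i k)) *
            (∏ i, fsnPDF pdens σ lam (u i)) *
            σ ^ (-(2 * a1 + 1)) * πlam lam)

/-- Propriety of the posterior of the one-way random-effect probit model
with FSN random effects whose density `p` is upper bounded. -/
theorem probit_fsn_posterior_proper
    {r : ℕ} {qs : Fin r → ℕ}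
    (yobs : (i : Fin r) → Fin (qs i) → ℕ)
    (pdens : ℝ → ℝ → ℝ) (Λset : Set ℝ) (πlam : ℝ → ℝ) (a1 : ℝ)
    (hbin : ∀ i k, yobs i k = 0 ∨ yobs i k = 1)
    (hΛmeas : MeasurableSet Λset)
    (hpmeas : Measurable fun wl : ℝ × ℝ => pdens wl.1 wl.2)
    -- `p(·|λ)` is a probability density on [0,1]
    (hpdens : ∀ lam ∈ Λset, (∀ w ∈ Set.Icc (0 : ℝ) 1, 0 ≤ pdens w lam) ∧
      ∫ w in Set.Icc (0 : ℝ) 1, pdens w lam = 1)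
    (hπmeas : Measurable πlam)
    (hπnonneg : ∀ lam ∈ Λset, 0 ≤ πlam lam)
    (hπproper : ∫ lam in Λset, πlam lam = 1)
    -- `p` is upper bounded by K
    (K : ℝ) (hK : 0 < K)
    (hbdd : ∀ w ∈ Set.Icc (0 : ℝ) 1, ∀ lam ∈ Λset, pdens w lam ≤ K)
    -- condition (i): groups 1,…,r₁ each contain at least one success and one failure
    (r1 : ℕ) (hr1 : 2 ≤ r1) (hr1r : r1 ≤ r)
    (hsf : ∀ i : Fin r, (i : ℕ) < r1 →
      (∃ k, yobs i k = 1) ∧ (∃ k, yobs i k = 0))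
    -- condition (ii): -(r₁ - 1)/2 < a₁ < 0
    (ha1 : -(((r1 : ℝ) - 1) / 2) < a1 ∧ a1 < 0) :
    probitFSNMarginal yobs pdens Λset πlam a1 < ⊤ := by
  obtain ⟨ha1l, ha1r⟩ := ha1
  set p : ℝ := -(2 * a1 + 1) with hpdef
  set n : ℕ := r1 - 1 with hndef
  have hn1 : 1 ≤ n := by omega
  have hnr : (n : ℝ) = (r1 : ℝ) - 1 := by
    rw [hndef, Nat.cast_sub (by omega : 1 ≤ r1)]; norm_num
  have hp1 : (-1 : ℝ) < p := by rw [hpdef]; linarith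
  have hp2 : p - (n:ℝ) < -1 := by rw [hnr, hpdef]; linarith
  set C0 : ℝ := K^r * Real.sqrt (2*π) with hC0def
  have hC0pos : 0 < C0 := by positivity
  set S : ℝ≥0∞ := ∫⁻ σ in Ioi (0:ℝ), ENNReal.ofReal (σ ^ p * ((Real.sqrt (1+σ^2))^n)⁻¹)
    with hSdef
  have hS : S < ⊤ := lint_lt_top_of_integrableOn (sigma_integrableOn n hp1 hp2)
  -- λ-integral of the prior
  have hπint : IntegrableOn πlam Λset := by
    by_contra hcon
    rw [MeasureTheory.integral_undef hcon] at hπproper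
    norm_num at hπproper
  have hπae : 0 ≤ᵐ[volume.restrict Λset] πlam := by
    rw [Filter.EventuallyLE, ae_restrict_iff' hΛmeas]
    exact Filter.Eventually.of_forall hπnonneg
  have hπlint : ∫⁻ lam in Λset, ENNReal.ofReal (πlam lam) = 1 := by
    rw [← ofReal_integral_eq_lintegral_ofReal hπint hπae, hπproper, ENNReal.ofReal_one]
  -- key inner bound
  have key : ∀ lam ∈ Λset,
      (∫⁻ σ in Set.Ioi (0 : ℝ), ∫⁻ μ : ℝ, ∫⁻ u : Fin r → ℝ,
        ENNReal.ofReal (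
          (∏ i, ∏ k, (stdNormalCDF (μ + u i)) ^ (yobs i k) *
            (1 - stdNormalCDF (μ + u i)) ^ (1 - yobs i k)) *
          (∏ i, fsnPDF pdens σ lam (u i)) *
          σ ^ p * πlam lam)) ≤
      (ENNReal.ofReal C0 * ENNReal.ofReal (πlam lam)) * S := by
    intro lam hlam
    have hπl : 0 ≤ πlam lam := hπnonneg lam hlam
    -- step over σ
    have stepσ : ∀ σ ∈ Ioi (0:ℝ),
        (∫⁻ μ : ℝ, ∫⁻ u : Fin r → ℝ,
          ENNReal.ofReal (
            (∏ i, ∏ k, (stdNormalCDF (μ + u i)) ^ (yobs i k) *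
              (1 - stdNormalCDF (μ + u i)) ^ (1 - yobs i k)) *
            (∏ i, fsnPDF pdens σ lam (u i)) *
            σ ^ p * πlam lam)) ≤
        (ENNReal.ofReal C0 * ENNReal.ofReal (πlam lam)) *
          ENNReal.ofReal (σ ^ p * ((Real.sqrt (1+σ^2))^n)⁻¹) := by
      intro σ hσmem
      have hσ : (0:ℝ) < σ := hσmem
      set T : ℝ := Real.sqrt (1+σ^2) with hTdef
      have hT1 : (1:ℝ) ≤ T := Real.one_le_sqrt.2 (by nlinarith [sq_nonneg σ])
      have hT0 : (0:ℝ) < T := lt_of_lt_of_le one_pos hT1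
      have hσp : (0:ℝ) ≤ σ ^ p := Real.rpow_nonneg hσ.le p
      have hr1n : r1 = n + 1 := by omega
      set E : ℝ → ℝ := fun μ => Real.exp (-(μ^2/(2*(1+σ^2)))) with hEdef
      -- the per-μ bound
      have stepμ : ∀ μ : ℝ,
          (∫⁻ u : Fin r → ℝ,
            ENNReal.ofReal (
              (∏ i, ∏ k, (stdNormalCDF (μ + u i)) ^ (yobs i k) *
                (1 - stdNormalCDF (μ + u i)) ^ (1 - yobs i k)) *
              (∏ i, fsnPDF pdens σ lam (u i)) *
              σ ^ p * πlam lam)) ≤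
          ENNReal.ofReal (K^r * ((T^r1)⁻¹ *
              Real.exp (-((r1:ℝ)*μ^2/(2*(1+σ^2)))))) *
            ENNReal.ofReal (σ ^ p * πlam lam) := by
        intro μ
        set g : Fin r → ℝ → ℝ := fun i v =>
          (if (i:ℕ) < r1 then Real.exp (-((μ + v)^2)/2) else 1) *
            (K * (1/σ) * stdNormalPDF (v/σ)) with hgdef
        have hgnn : ∀ i v, 0 ≤ g i v := by
          intro i v
          simp only [hgdef]
          apply mul_nonneg
          · split
            · exact (Real.exp_pos _).le
            · exact zero_le_one
          · have := stdNormalPDF_nonneg (v/σ); positivity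
        have hgint : ∀ i, Integrable (g i) := by
          intro i
          by_cases hi : (i:ℕ) < r1
          · simp only [hgdef, if_pos hi]
            exact int1_integrable K μ hσ
          · simp only [hgdef, if_neg hi, one_mul]
            exact int2_integrable K hσ
        have hprod_int : Integrable (fun u : Fin r → ℝ => ∏ i, g i (u i)) :=
          Integrable.fintype_prod hgint
        have hprodnn : ∀ u : Fin r → ℝ, 0 ≤ ∏ i, g i (u i) :=
          fun u => Finset.prod_nonneg (fun i _ => hgnn i (u i))
        -- pointwise bound
        have hpt : ∀ u : Fin r → ℝ,
            ENNReal.ofReal (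
              (∏ i, ∏ k, (stdNormalCDF (μ + u i)) ^ (yobs i k) *
                (1 - stdNormalCDF (μ + u i)) ^ (1 - yobs i k)) *
              (∏ i, fsnPDF pdens σ lam (u i)) *
              σ ^ p * πlam lam) ≤
            ENNReal.ofReal ((∏ i, g i (u i)) * (σ ^ p * πlam lam)) := by
          intro u
          apply ENNReal.ofReal_le_ofReal
          have hfacnn : ∀ (i : Fin r) (k : Fin (qs i)),
              0 ≤ (stdNormalCDF (μ + u i)) ^ (yobs i k) *
                (1 - stdNormalCDF (μ + u i)) ^ (1 - yobs i k) :=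
            fun i k => mul_nonneg (pow_nonneg (stdNormalCDF_nonneg _) _)
              (pow_nonneg (by linarith [stdNormalCDF_le_one (μ + u i)]) _)
          have hfacle1 : ∀ (i : Fin r) (k : Fin (qs i)),
              (stdNormalCDF (μ + u i)) ^ (yobs i k) *
                (1 - stdNormalCDF (μ + u i)) ^ (1 - yobs i k) ≤ 1 := by
            intro i k
            have h1 := stdNormalCDF_nonneg (μ + u i)
            have h2 := stdNormalCDF_le_one (μ + u i)
            calc (stdNormalCDF (μ + u i)) ^ (yobs i k) *
                  (1 - stdNormalCDF (μ + u i)) ^ (1 - yobs i k)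
                ≤ 1 * 1 := by
                  apply mul_le_mul (pow_le_one₀ h1 h2) (pow_le_one₀ (by linarith) (by linarith))
                    (pow_nonneg (by linarith) _) zero_le_one
              _ = 1 := mul_one _
          have hinn : ∀ i : Fin r, 0 ≤ ∏ k, (stdNormalCDF (μ + u i)) ^ (yobs i k) *
              (1 - stdNormalCDF (μ + u i)) ^ (1 - yobs i k) :=
            fun i => Finset.prod_nonneg (fun k _ => hfacnn i k)
          have hin1 : ∀ i : Fin r, (∏ k, (stdNormalCDF (μ + u i)) ^ (yobs i k) *
              (1 - stdNormalCDF (μ + u i)) ^ (1 - yobs i k)) ≤ 1 :=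
            fun i => Finset.prod_le_one (fun k _ => hfacnn i k) (fun k _ => hfacle1 i k)
          have hinlt : ∀ i : Fin r, (i:ℕ) < r1 →
              (∏ k, (stdNormalCDF (μ + u i)) ^ (yobs i k) *
                (1 - stdNormalCDF (μ + u i)) ^ (1 - yobs i k)) ≤
              Real.exp (-((μ + u i)^2)/2) := by
            intro i hi
            obtain ⟨⟨k1, hk1⟩, ⟨k0, hk0⟩⟩ := hsf i hi
            have hne : k0 ≠ k1 := by
              intro h; rw [h, hk1] at hk0; exact one_ne_zero hk0
            set f : Fin (qs i) → ℝ := fun k => (stdNormalCDF (μ + u i)) ^ (yobs i k) *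
              (1 - stdNormalCDF (μ + u i)) ^ (1 - yobs i k) with hfdef
            have hf1 : f k1 = stdNormalCDF (μ + u i) := by
              simp [hfdef, hk1]
            have hf0 : f k0 = 1 - stdNormalCDF (μ + u i) := by
              simp [hfdef, hk0]
            have hΦ1 := stdNormalCDF_nonneg (μ + u i)
            have hΦ2 := stdNormalCDF_le_one (μ + u i)
            have hrest : ∏ k ∈ (Finset.univ.erase k1).erase k0, f k ≤ 1 :=
              Finset.prod_le_one (fun k _ => hfacnn i k) (fun k _ => hfacle1 i k)
            have hrestnn : 0 ≤ ∏ k ∈ (Finset.univ.erase k1).erase k0, f k :=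
              Finset.prod_nonneg (fun k _ => hfacnn i k)
            calc (∏ k, f k)
                = f k1 * ∏ k ∈ Finset.univ.erase k1, f k :=
                  (Finset.mul_prod_erase _ _ (Finset.mem_univ _)).symm
              _ = f k1 * (f k0 * ∏ k ∈ (Finset.univ.erase k1).erase k0, f k) := by
                  rw [Finset.mul_prod_erase _ _
                    (Finset.mem_erase.2 ⟨hne, Finset.mem_univ _⟩)]
              _ ≤ f k1 * (f k0 * 1) := by
                  apply mul_le_mul_of_nonneg_left _ (by rw [hf1]; exact hΦ1)
                  apply mul_le_mul_of_nonneg_left hrest (by rw [hf0]; linarith)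
              _ = stdNormalCDF (μ + u i) * (1 - stdNormalCDF (μ + u i)) := by
                  rw [hf1, hf0, mul_one]
              _ ≤ Real.exp (-((μ + u i)^2)/2) := cdf_mul_le (μ + u i)
          -- bound P1
          have hP1 : (∏ i, ∏ k, (stdNormalCDF (μ + u i)) ^ (yobs i k) *
                (1 - stdNormalCDF (μ + u i)) ^ (1 - yobs i k)) ≤
              ∏ i : Fin r, (if (i:ℕ) < r1 then Real.exp (-((μ + u i)^2)/2) else 1) := by
            apply Finset.prod_le_prod (fun i _ => hinn i)
            intro i _
            by_cases hi : (i:ℕ) < r1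
            · rw [if_pos hi]; exact hinlt i hi
            · rw [if_neg hi]; exact hin1 i
          have hfsnnn : ∀ i : Fin r, 0 ≤ fsnPDF pdens σ lam (u i) := by
            intro i
            rw [fsnPDF]
            have hmem : stdNormalCDF (u i / σ) ∈ Set.Icc (0:ℝ) 1 :=
              ⟨stdNormalCDF_nonneg _, stdNormalCDF_le_one _⟩
            have hpd := (hpdens lam hlam).1 _ hmem
            have := stdNormalPDF_nonneg (u i / σ)
            positivity
          have hP2 : (∏ i, fsnPDF pdens σ lam (u i)) ≤
              ∏ i : Fin r, K * (1/σ) * stdNormalPDF (u i / σ) := by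
            apply Finset.prod_le_prod (fun i _ => hfsnnn i)
            intro i _
            rw [fsnPDF]
            have hmem : stdNormalCDF (u i / σ) ∈ Set.Icc (0:ℝ) 1 :=
              ⟨stdNormalCDF_nonneg _, stdNormalCDF_le_one _⟩
            calc (1/σ) * pdens (stdNormalCDF (u i / σ)) lam * stdNormalPDF (u i / σ)
                ≤ (1/σ) * K * stdNormalPDF (u i / σ) := by
                  apply mul_le_mul_of_nonneg_right _ (stdNormalPDF_nonneg _)
                  exact mul_le_mul_of_nonneg_left (hbdd _ hmem lam hlam) (by positivity)
              _ = K * (1/σ) * stdNormalPDF (u i / σ) := by ring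
          have hgu : (∏ i : Fin r, (if (i:ℕ) < r1 then Real.exp (-((μ + u i)^2)/2) else 1)) *
              (∏ i : Fin r, K * (1/σ) * stdNormalPDF (u i / σ)) = ∏ i, g i (u i) := by
            rw [← Finset.prod_mul_distrib]
          have hcomb : (∏ i, ∏ k, (stdNormalCDF (μ + u i)) ^ (yobs i k) *
                (1 - stdNormalCDF (μ + u i)) ^ (1 - yobs i k)) *
              (∏ i, fsnPDF pdens σ lam (u i)) ≤ ∏ i, g i (u i) := by
            rw [← hgu]
            apply mul_le_mul hP1 hP2 (Finset.prod_nonneg (fun i _ => hfsnnn i))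
            apply Finset.prod_nonneg
            intro i _
            split
            · exact (Real.exp_pos _).le
            · exact zero_le_one
          calc (∏ i, ∏ k, (stdNormalCDF (μ + u i)) ^ (yobs i k) *
                (1 - stdNormalCDF (μ + u i)) ^ (1 - yobs i k)) *
              (∏ i, fsnPDF pdens σ lam (u i)) * σ ^ p * πlam lam
              = ((∏ i, ∏ k, (stdNormalCDF (μ + u i)) ^ (yobs i k) *
                  (1 - stdNormalCDF (μ + u i)) ^ (1 - yobs i k)) *
                (∏ i, fsnPDF pdens σ lam (u i))) * (σ ^ p * πlam lam) := by ring
            _ ≤ (∏ i, g i (u i)) * (σ ^ p * πlam lam) :=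
                mul_le_mul_of_nonneg_right hcomb (mul_nonneg hσp hπl)
        -- now compute the u-integral of the bound
        have hvali : ∀ i : Fin r, (∫ v, g i v) =
            if (i:ℕ) < r1 then K * E μ / T else K := by
          intro i
          by_cases hi : (i:ℕ) < r1
          · simp only [hgdef, if_pos hi]
            exact int1_integral K μ hσ
          · simp only [hgdef, if_neg hi, one_mul]
            exact int2_integral K hσ
        have hcard2 : (Finset.univ.filter (fun i : Fin r => ¬((i:ℕ) < r1))).card = r - r1 := by
          have h := Finset.card_filter_add_card_filter_not
            (s := (Finset.univ : Finset (Fin r))) (p := fun i : Fin r => (i:ℕ) < r1)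
          rw [card_filter_lt hr1r] at h
          simp only [Finset.card_univ, Fintype.card_fin] at h
          omega
        have hprodval : (∏ i : Fin r, ∫ v, g i v) =
            K^r * ((T^r1)⁻¹ * Real.exp (-((r1:ℝ)*μ^2/(2*(1+σ^2))))) := by
          calc (∏ i : Fin r, ∫ v, g i v)
              = ∏ i : Fin r, (if (i:ℕ) < r1 then K * E μ / T else K) :=
                Finset.prod_congr rfl (fun i _ => hvali i)
            _ = (K * E μ / T)^r1 * K^(r-r1) := by
                rw [Finset.prod_ite, Finset.prod_const, Finset.prod_const,
                  card_filter_lt hr1r, hcard2]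
            _ = _ := by
                rw [div_pow, mul_pow]
                rw [show (E μ)^r1 = Real.exp (-((r1:ℝ)*μ^2/(2*(1+σ^2)))) from by
                  rw [hEdef, ← Real.exp_nat_mul]
                  congr 1
                  ring]
                rw [show (K:ℝ)^r1 * Real.exp (-((r1:ℝ)*μ^2/(2*(1+σ^2)))) / T^r1 * K^(r-r1)
                    = (K^r1 * K^(r-r1)) * ((T^r1)⁻¹ * Real.exp (-((r1:ℝ)*μ^2/(2*(1+σ^2)))))
                    from by ring]
                rw [← pow_add]
                congr 2
                omega
        calc (∫⁻ u : Fin r → ℝ,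
              ENNReal.ofReal (
                (∏ i, ∏ k, (stdNormalCDF (μ + u i)) ^ (yobs i k) *
                  (1 - stdNormalCDF (μ + u i)) ^ (1 - yobs i k)) *
                (∏ i, fsnPDF pdens σ lam (u i)) *
                σ ^ p * πlam lam))
            ≤ ∫⁻ u : Fin r → ℝ, ENNReal.ofReal ((∏ i, g i (u i)) * (σ ^ p * πlam lam)) :=
              lintegral_mono hpt
          _ = ∫⁻ u : Fin r → ℝ, ENNReal.ofReal (∏ i, g i (u i)) *
                ENNReal.ofReal (σ ^ p * πlam lam) := by
              congr 1
              funext u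
              rw [ENNReal.ofReal_mul (hprodnn u)]
          _ = (∫⁻ u : Fin r → ℝ, ENNReal.ofReal (∏ i, g i (u i))) *
                ENNReal.ofReal (σ ^ p * πlam lam) :=
              lintegral_mul_const' _ _ ENNReal.ofReal_ne_top
          _ = ENNReal.ofReal (∫ u : Fin r → ℝ, ∏ i, g i (u i)) *
                ENNReal.ofReal (σ ^ p * πlam lam) := by
              rw [ofReal_integral_eq_lintegral_ofReal hprod_int
                (Filter.Eventually.of_forall hprodnn)]
          _ = ENNReal.ofReal (K^r * ((T^r1)⁻¹ *
                Real.exp (-((r1:ℝ)*μ^2/(2*(1+σ^2)))))) *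
                ENNReal.ofReal (σ ^ p * πlam lam) := by
              rw [MeasureTheory.integral_fintype_prod_volume_eq_prod g, hprodval]
      -- integrate the bound over μ
      have hKT : (0:ℝ) ≤ K^r * (T^r1)⁻¹ := by positivity
      calc (∫⁻ μ : ℝ, ∫⁻ u : Fin r → ℝ,
            ENNReal.ofReal (
              (∏ i, ∏ k, (stdNormalCDF (μ + u i)) ^ (yobs i k) *
                (1 - stdNormalCDF (μ + u i)) ^ (1 - yobs i k)) *
              (∏ i, fsnPDF pdens σ lam (u i)) *
              σ ^ p * πlam lam))
          ≤ ∫⁻ μ : ℝ, ENNReal.ofReal (K^r * ((T^r1)⁻¹ *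
                Real.exp (-((r1:ℝ)*μ^2/(2*(1+σ^2)))))) *
              ENNReal.ofReal (σ ^ p * πlam lam) :=
            lintegral_mono stepμ
        _ = ∫⁻ μ : ℝ, (ENNReal.ofReal (K^r * (T^r1)⁻¹) *
              ENNReal.ofReal (σ ^ p * πlam lam)) *
              ENNReal.ofReal (Real.exp (-((r1:ℝ)*μ^2/(2*(1+σ^2))))) := by
            congr 1
            funext μ
            rw [show K^r * ((T^r1)⁻¹ * Real.exp (-((r1:ℝ)*μ^2/(2*(1+σ^2)))))
                = (K^r * (T^r1)⁻¹) * Real.exp (-((r1:ℝ)*μ^2/(2*(1+σ^2)))) from by ring]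
            rw [ENNReal.ofReal_mul hKT]
            ring
        _ = (ENNReal.ofReal (K^r * (T^r1)⁻¹) * ENNReal.ofReal (σ ^ p * πlam lam)) *
              ∫⁻ μ : ℝ, ENNReal.ofReal (Real.exp (-((r1:ℝ)*μ^2/(2*(1+σ^2))))) :=
            lintegral_const_mul' _ _
              (ENNReal.mul_ne_top ENNReal.ofReal_ne_top ENNReal.ofReal_ne_top)
        _ = (ENNReal.ofReal (K^r * (T^r1)⁻¹) * ENNReal.ofReal (σ ^ p * πlam lam)) *
              ENNReal.ofReal (∫ μ : ℝ, Real.exp (-((r1:ℝ)*μ^2/(2*(1+σ^2))))) := by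
            rw [ofReal_integral_eq_lintegral_ofReal (mu_integrable r1 (by omega))
              (Filter.Eventually.of_forall (fun μ => (Real.exp_pos _).le))]
        _ ≤ (ENNReal.ofReal (K^r * (T^r1)⁻¹) * ENNReal.ofReal (σ ^ p * πlam lam)) *
              ENNReal.ofReal (Real.sqrt (2*π) * T) := by
            apply mul_le_mul_right
            exact ENNReal.ofReal_le_ofReal (mu_integral_le r1 (by omega))
        _ = (ENNReal.ofReal C0 * ENNReal.ofReal (πlam lam)) *
              ENNReal.ofReal (σ ^ p * ((Real.sqrt (1+σ^2))^n)⁻¹) := by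
            rw [← hTdef]
            rw [← ENNReal.ofReal_mul hKT, ← ENNReal.ofReal_mul (by positivity),
              ← ENNReal.ofReal_mul hC0pos.le,
              ← ENNReal.ofReal_mul (by positivity : (0:ℝ) ≤ C0 * πlam lam)]
            congr 1
            have hTT : (T^r1)⁻¹ * T = (T^n)⁻¹ := by
              rw [hr1n, pow_succ]
              field_simp
            calc K^r * (T^r1)⁻¹ * (σ ^ p * πlam lam) * (Real.sqrt (2*π) * T)
                = (K^r * Real.sqrt (2*π)) * πlam lam * (σ ^ p * ((T^r1)⁻¹ * T)) := by ring
              _ = C0 * πlam lam * (σ ^ p * (T^n)⁻¹) := by rw [hTT, hC0def]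
    calc (∫⁻ σ in Set.Ioi (0 : ℝ), ∫⁻ μ : ℝ, ∫⁻ u : Fin r → ℝ,
          ENNReal.ofReal (
            (∏ i, ∏ k, (stdNormalCDF (μ + u i)) ^ (yobs i k) *
              (1 - stdNormalCDF (μ + u i)) ^ (1 - yobs i k)) *
            (∏ i, fsnPDF pdens σ lam (u i)) *
            σ ^ p * πlam lam))
        ≤ ∫⁻ σ in Set.Ioi (0 : ℝ),
            (ENNReal.ofReal C0 * ENNReal.ofReal (πlam lam)) *
              ENNReal.ofReal (σ ^ p * ((Real.sqrt (1+σ^2))^n)⁻¹) :=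
          setLIntegral_mono' measurableSet_Ioi stepσ
      _ = (ENNReal.ofReal C0 * ENNReal.ofReal (πlam lam)) * S := by
          rw [hSdef]
          exact lintegral_const_mul' _ _ (ENNReal.mul_ne_top ENNReal.ofReal_ne_top
            ENNReal.ofReal_ne_top)
  -- assemble
  rw [probitFSNMarginal]
  calc (∫⁻ lam in Λset, ∫⁻ σ in Set.Ioi (0 : ℝ), ∫⁻ μ : ℝ, ∫⁻ u : Fin r → ℝ,
        ENNReal.ofReal (
          (∏ i, ∏ k, (stdNormalCDF (μ + u i)) ^ (yobs i k) *
            (1 - stdNormalCDF (μ + u i)) ^ (1 - yobs i k)) *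
          (∏ i, fsnPDF pdens σ lam (u i)) *
          σ ^ p * πlam lam))
      ≤ ∫⁻ lam in Λset, (ENNReal.ofReal C0 * ENNReal.ofReal (πlam lam)) * S :=
        setLIntegral_mono' hΛmeas key
    _ = ∫⁻ lam in Λset, (ENNReal.ofReal C0 * S) * ENNReal.ofReal (πlam lam) := by
        congr 1; funext lam; ring
    _ = (ENNReal.ofReal C0 * S) * ∫⁻ lam in Λset, ENNReal.ofReal (πlam lam) :=
        lintegral_const_mul' _ _ (ENNReal.mul_ne_top ENNReal.ofReal_ne_top hS.ne)
    _ = ENNReal.ofReal C0 * S := by rw [hπlint, mul_one]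
    _ < ⊤ := ENNReal.mul_lt_top ENNReal.ofReal_lt_top hS
end
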